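/- If P is a complex polynomial of degree n having no zeros in the open unit disk, then the maximum of |P'| on the unit circle is at most (n/2)(M − m), where M = max_{|z|=1}|P(z)| and m = min_{|z|=1}|P(z)|. -/

import Mathlib

open Polynomial Metric Set

noncomputable def maxSphere (P : Polynomial ℂ) : ℝ :=
  sSup ((fun w => ‖P.eval w‖) '' sphere (0:ℂ) 1)

noncomputable def minSphere (P : Polynomial ℂ) : ℝ :=
  sInf ((fun w => ‖P.eval w‖) '' sphere (0:ℂ) 1)

/-!
For `deg H ≤ n` write `H*(z) = zⁿ · conj (H (1 / conj z))`, and let `Q = P*`. On `|z| = 1` one has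
`|(H*)'(z)| = |n H(z) - z H'(z)|`. If `H` has no zeros in the open disk, then
`z H'(z) / H(z) = ∑ z / (z - r)` over the roots `r` has real part at most `n / 2`, so
`|H'(z)| ≤ |(H*)'(z)|` on the circle. Apply this to `H = P - λ` with `|λ| < m` (zero-free by the
minimum modulus principle) and to `H = Q - ν` with `|ν| > M` (zero-free since `|Q| ≤ M` on the
disk); choosing the arguments of `λ` and `ν` suitably gives `|P'(z)| + n m ≤ |Q'(z)|` and
`|P'(z)| + |Q'(z)| ≤ n M`, whose sum is `2 |P'(z)| ≤ n (M - m)`.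
-/

namespace Complex

theorem norm_ofReal_sub_sq_sub_norm_sq (w : ℂ) (c : ℝ) :
    ‖(c : ℂ) - w‖ ^ 2 - ‖w‖ ^ 2 = c * (c - 2 * w.re) := by
  simp only [Complex.sq_norm, normSq_apply, sub_re, sub_im, ofReal_re, ofReal_im]
  ring

theorem re_le_half_of_norm_le_norm_one_sub {w : ℂ} (h : ‖w‖ ≤ ‖1 - w‖) :
    w.re ≤ 1 / 2 := by
  have := norm_ofReal_sub_sq_sub_norm_sq w 1
  push_cast at this
  nlinarith [norm_nonneg w]

theorem norm_le_norm_ofReal_sub_of_re_le {w : ℂ} {c : ℝ} (hc : 0 ≤ c)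
    (h : w.re ≤ c / 2) : ‖w‖ ≤ ‖(c : ℂ) - w‖ := by
  have := norm_ofReal_sub_sq_sub_norm_sq w c
  exact le_of_sq_le_sq (by nlinarith) (norm_nonneg _)

theorem re_div_sub_le_half {z r : ℂ} (hzr : ‖z‖ ≤ ‖r‖) : (z / (z - r)).re ≤ 1 / 2 := by
  rcases eq_or_ne z r with rfl | hne
  · simp
  apply re_le_half_of_norm_le_norm_one_sub
  have hsub : z - r ≠ 0 := sub_ne_zero.mpr hne
  rw [one_sub_div hsub, sub_sub_cancel_left, norm_div, norm_div, norm_neg]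
  gcongr

theorem norm_ofReal_mul_exp_arg_mul_I (a : ℂ) (s : ℝ) :
    ‖s * exp (a.arg * I)‖ = |s| := by
  rw [norm_mul, norm_exp_ofReal_mul_I, mul_one, norm_real, Real.norm_eq_abs]

theorem norm_sub_ofReal_mul_exp_arg_mul_I (a : ℂ) (s : ℝ) :
    ‖a - s * exp (a.arg * I)‖ = |‖a‖ - s| := by
  have ha := norm_mul_exp_arg_mul_I a
  calc ‖a - s * exp (a.arg * I)‖
      = ‖((‖a‖ - s : ℝ) : ℂ) * exp (a.arg * I)‖ := by
        push_cast
        rw [sub_mul, ha]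
    _ = |‖a‖ - s| := norm_ofReal_mul_exp_arg_mul_I a _

theorem norm_add_norm_le_of_forall_lt_norm {a b : ℂ} {R : ℝ} (hab : ‖a‖ ≤ ‖b‖)
    (hR : 0 ≤ R) (h : ∀ d : ℂ, R < ‖d‖ → ‖b‖ ≤ ‖a - d‖) : ‖a‖ + ‖b‖ ≤ R := by
  by_contra! hlt
  set s := (R + ‖a‖ + ‖b‖) / 2 with hs
  have hd := h (s * exp (a.arg * I)) (by
    rw [norm_ofReal_mul_exp_arg_mul_I]
    exact lt_of_lt_of_le (by linarith) (le_abs_self s))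
  rw [norm_sub_ofReal_mul_exp_arg_mul_I] at hd
  have : |‖a‖ - s| < ‖b‖ := abs_sub_lt_iff.mpr ⟨by linarith, by linarith⟩
  linarith

theorem norm_add_le_norm_of_forall_norm_lt {a b : ℂ} {r : ℝ} (ha : a ≠ 0)
    (hab : ‖a‖ ≤ ‖b‖) (h : ∀ d : ℂ, ‖d‖ < r → ‖a‖ ≤ ‖b - d‖) : ‖a‖ + r ≤ ‖b‖ := by
  by_contra! hlt
  have ha' : 0 < ‖a‖ := norm_pos_iff.mpr ha
  set t := (‖b‖ - ‖a‖ + min r (‖b‖ + ‖a‖)) / 2 with ht_def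
  have hmin : ‖b‖ - ‖a‖ < min r (‖b‖ + ‖a‖) := lt_min (by linarith) (by linarith)
  have ht : t < min r (‖b‖ + ‖a‖) := by linarith
  have hd := h (t * exp (b.arg * I)) (by
    rw [norm_ofReal_mul_exp_arg_mul_I, abs_of_nonneg (by linarith)]
    exact ht.trans_le (min_le_left _ _))
  rw [norm_sub_ofReal_mul_exp_arg_mul_I] at hd
  have : |‖b‖ - t| < ‖a‖ :=
    abs_sub_lt_iff.mpr ⟨by linarith, by linarith [ht.trans_le (min_le_right r (‖b‖ + ‖a‖))]⟩
  linarith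

theorem exists_natCast_mul_conj_mul_pow_eq {n : ℕ} (hn : 0 < n) {z : ℂ} (hz : ‖z‖ = 1)
    (d : ℂ) : ∃ c : ℂ, n * starRingEnd ℂ c * z ^ (n - 1) = d ∧ ‖d‖ = n * ‖c‖ := by
  have hz0 : z ^ (n - 1) ≠ 0 := pow_ne_zero _ (norm_ne_zero_iff.mp (by simp [hz]))
  have hn0 : (n : ℂ) ≠ 0 := Nat.cast_ne_zero.mpr hn.ne'
  refine ⟨starRingEnd ℂ (d / (n * z ^ (n - 1))), ?_, ?_⟩
  · rw [conj_conj]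
    field_simp
  · rw [norm_conj, norm_div, norm_mul, norm_pow, hz, one_pow, mul_one, norm_natCast]
    field_simp

theorem norm_le_of_forall_norm_eq_one_le {f : ℂ → ℂ} (hf : DiffContOnCl ℂ f (ball 0 1))
    {M : ℝ} (hM : ∀ w : ℂ, ‖w‖ = 1 → ‖f w‖ ≤ M) {w : ℂ} (hw : ‖w‖ ≤ 1) : ‖f w‖ ≤ M :=
  norm_le_of_forall_mem_frontier_norm_le isBounded_ball hf
    (fun z hz => hM z (by simpa [frontier_ball (0 : ℂ) one_ne_zero] using hz))
    (by simpa [closure_ball (0 : ℂ) one_ne_zero] using hw)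

theorem le_norm_of_forall_norm_eq_one_le {f : ℂ → ℂ} (hf : Differentiable ℂ f)
    (h0 : ∀ w : ℂ, ‖w‖ < 1 → f w ≠ 0) {m : ℝ} (hm : ∀ w : ℂ, ‖w‖ = 1 → m ≤ ‖f w‖) {w : ℂ}
    (hw : ‖w‖ ≤ 1) : m ≤ ‖f w‖ := by
  rcases le_or_gt m 0 with hm0 | hm0
  · exact hm0.trans (norm_nonneg _)
  have hne : ∀ w : ℂ, ‖w‖ ≤ 1 → f w ≠ 0 := fun w hw => by
    rcases hw.lt_or_eq with hlt | heq
    · exact h0 w hlt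
    · exact norm_pos_iff.mp (hm0.trans_le (hm w heq))
  have hinv : DiffContOnCl ℂ f⁻¹ (ball 0 1) := by
    refine DifferentiableOn.diffContOnCl (hf.differentiableOn.inv fun w hw => hne w ?_)
    simpa [closure_ball (0 : ℂ) one_ne_zero] using hw
  have := norm_le_of_forall_norm_eq_one_le hinv
    (fun w hw => by simpa [norm_inv] using inv_anti₀ hm0 (hm w hw)) hw
  rw [Pi.inv_apply, norm_inv] at this
  exact (inv_le_inv₀ (norm_pos_iff.mpr (hne w hw)) hm0).mp this

end Complex

namespace Polynomial

-- For `natDegree p ≤ n` this is `p*(z) = zⁿ · conj (p (1 / conj z))`.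
noncomputable def conjReflect (n : ℕ) (p : ℂ[X]) : ℂ[X] :=
  reflect n (p.map (starRingEnd ℂ))

theorem conjReflect_conjReflect (n : ℕ) (p : ℂ[X]) : (p.conjReflect n).conjReflect n = p := by
  ext k
  simp [conjReflect, coeff_reflect, revAt_invol]

theorem natDegree_conjReflect_le {n : ℕ} {p : ℂ[X]} (hp : p.natDegree ≤ n) :
    (p.conjReflect n).natDegree ≤ n :=
  natDegree_reflect_le.trans (max_le le_rfl (natDegree_map_le.trans hp))

theorem conjReflect_add (n : ℕ) (p q : ℂ[X]) :
    (p + q).conjReflect n = p.conjReflect n + q.conjReflect n := by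
  rw [conjReflect, Polynomial.map_add, reflect_add, conjReflect, conjReflect]

theorem conjReflect_sub_C (n : ℕ) (p : ℂ[X]) (c : ℂ) :
    (p - C c).conjReflect n = p.conjReflect n - C (starRingEnd ℂ c) * X ^ n := by
  rw [conjReflect, Polynomial.map_sub, map_C, reflect_sub, reflect_C, conjReflect]

theorem conjReflect_C_mul_X_pow {n i : ℕ} (hi : i ≤ n) (a : ℂ) :
    (C a * X ^ i).conjReflect n = C (starRingEnd ℂ a) * X ^ (n - i) := by
  rw [conjReflect, Polynomial.map_mul, map_C, Polynomial.map_pow, map_X, reflect_C_mul_X_pow,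
    revAt_le hi]

theorem eval_conjReflect {n : ℕ} {p : ℂ[X]} (hp : p.natDegree ≤ n) {z : ℂ} (hz : ‖z‖ = 1) :
    (p.conjReflect n).eval z = z ^ n * starRingEnd ℂ (p.eval z) := by
  refine induction_with_natDegree_le
    (fun p => (p.conjReflect n).eval z = z ^ n * starRingEnd ℂ (p.eval z)) n ?_
    (fun i a _ hi => ?_) (fun f g _ _ hf hg => ?_) p hp
  · simp [conjReflect]
  · rw [conjReflect_C_mul_X_pow hi]
    simp only [eval_mul, eval_C, eval_pow, eval_X, map_mul, map_pow, ← Complex.inv_eq_conj hz]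
    obtain ⟨k, rfl⟩ := Nat.exists_eq_add_of_le hi
    have hz0 : z ≠ 0 := norm_ne_zero_iff.mp (by simp [hz])
    rw [Nat.add_sub_cancel_left, pow_add, inv_pow]
    field_simp
  · simp only [conjReflect_add, eval_add, hf, hg, map_add, mul_add]

theorem eval_derivative_conjReflect {n : ℕ} {p : ℂ[X]} (hp : p.natDegree ≤ n) {z : ℂ}
    (hz : ‖z‖ = 1) :
    (derivative (p.conjReflect n)).eval z =
      z ^ (n - 1) * starRingEnd ℂ (n * p.eval z - z * (derivative p).eval z) := by
  refine induction_with_natDegree_le (fun p => (derivative (p.conjReflect n)).eval z =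
      z ^ (n - 1) * starRingEnd ℂ (n * p.eval z - z * (derivative p).eval z)) n ?_
    (fun i a _ hi => ?_) (fun f g _ _ hf hg => ?_) p hp
  · simp [conjReflect]
  · rw [conjReflect_C_mul_X_pow hi]
    obtain ⟨k, rfl⟩ := Nat.exists_eq_add_of_le hi
    have hz0 : z ≠ 0 := norm_ne_zero_iff.mp (by simp [hz])
    simp only [derivative_C_mul_X_pow, eval_mul, eval_C, eval_pow, eval_X, eval_natCast, map_mul,
      map_pow, map_sub, map_natCast, ← Complex.inv_eq_conj hz, Nat.add_sub_cancel_left]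
    have hX : z⁻¹ * (starRingEnd ℂ a * i * z⁻¹ ^ (i - 1)) = starRingEnd ℂ a * i * z⁻¹ ^ i := by
      rcases i with _ | i
      · simp
      · simp only [Nat.add_sub_cancel, pow_succ]
        ring
    rw [hX]
    rcases k with _ | k
    · push_cast
      ring
    · rw [Nat.add_sub_cancel, ← add_assoc, Nat.add_sub_cancel, pow_add, inv_pow]
      field_simp
      push_cast
      ring
  · rw [conjReflect_add, derivative_add, eval_add, hf, hg, ← mul_add, ← map_add, derivative_add,
      eval_add, eval_add]
    congr 2
    ring

theorem norm_eval_derivative_le_norm_sub {H : ℂ[X]} {N : ℕ} (hN : H.natDegree ≤ N)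
    (hH : ∀ w : ℂ, ‖w‖ < 1 → H.eval w ≠ 0) {z : ℂ} (hz : ‖z‖ = 1) :
    ‖(derivative H).eval z‖ ≤ ‖N * H.eval z - z * (derivative H).eval z‖ := by
  rcases eq_or_ne (H.eval z) 0 with h0 | h0
  · simp [h0, hz]
  have hsplit := IsAlgClosed.splits H
  set w := z * (derivative H).eval z / H.eval z with hw
  have hw_sum : w = (H.roots.map fun r => z / (z - r)).sum := by
    rw [hw, mul_div_assoc, hsplit.eval_derivative_div_eval_of_ne_zero h0,
      ← Multiset.sum_map_mul_left]
    simp only [mul_one_div]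
  have hre : w.re ≤ N / 2 := by
    have hroots : ∀ r ∈ H.roots, ‖z‖ ≤ ‖r‖ := fun r hr => by
      rw [hz]
      by_contra! hlt
      exact hH r hlt (isRoot_of_mem_roots hr)
    calc w.re = (H.roots.map fun r => (z / (z - r)).re).sum := by
          simpa [Multiset.map_map, ← hw_sum] using
            map_multiset_sum Complex.reAddGroupHom (H.roots.map fun r => z / (z - r))
      _ ≤ (H.roots.map fun r => (z / (z - r)).re).card • (1 / 2 : ℝ) := by
          apply Multiset.sum_le_card_nsmul
          simp only [Multiset.mem_map]
          rintro _ ⟨r, hr, rfl⟩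
          exact Complex.re_div_sub_le_half (hroots r hr)
      _ ≤ N / 2 := by
          rw [Multiset.card_map, nsmul_eq_mul, ← hsplit.natDegree_eq_card_roots]
          have : (H.natDegree : ℝ) ≤ N := by exact_mod_cast hN
          linarith
  have hwN := Complex.norm_le_norm_ofReal_sub_of_re_le (Nat.cast_nonneg N) hre
  calc ‖(derivative H).eval z‖ = ‖w‖ * ‖H.eval z‖ := by
        rw [hw, norm_div, norm_mul, hz, one_mul, div_mul_cancel₀ _ (norm_ne_zero_iff.mpr h0)]
    _ ≤ ‖(N : ℂ) - w‖ * ‖H.eval z‖ := by gcongr; exact_mod_cast hwN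
    _ = ‖N * H.eval z - z * (derivative H).eval z‖ := by
        rw [← norm_mul, sub_mul, hw, div_mul_cancel₀ _ h0]

theorem norm_eval_derivative_le_norm_eval_derivative_conjReflect {n : ℕ} {H : ℂ[X]}
    (hn : H.natDegree ≤ n) (hH : ∀ w : ℂ, ‖w‖ < 1 → H.eval w ≠ 0) {z : ℂ} (hz : ‖z‖ = 1) :
    ‖(derivative H).eval z‖ ≤ ‖(derivative (H.conjReflect n)).eval z‖ := by
  rw [eval_derivative_conjReflect hn hz, norm_mul, norm_pow, hz, one_pow, one_mul,
    Complex.norm_conj]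
  exact norm_eval_derivative_le_norm_sub hn hH hz

theorem norm_eval_derivative_le_norm_eval_derivative_conjReflect_sub {n : ℕ} {H : ℂ[X]}
    (hn : H.natDegree ≤ n) {c : ℂ} (hH : ∀ w : ℂ, ‖w‖ < 1 → H.eval w ≠ c) {z : ℂ}
    (hz : ‖z‖ = 1) :
    ‖(derivative H).eval z‖ ≤
      ‖(derivative (H.conjReflect n)).eval z - n * starRingEnd ℂ c * z ^ (n - 1)‖ := by
  have key := norm_eval_derivative_le_norm_eval_derivative_conjReflect (H := H - C c)
    ((natDegree_sub_le _ _).trans (by simpa using hn))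
    (fun w hw => by simpa [sub_eq_zero] using hH w hw) hz
  simpa [conjReflect_sub_C, derivative_X_pow, mul_assoc, mul_left_comm] using key

variable {n : ℕ} {P : ℂ[X]} {z : ℂ}

theorem pos_of_eval_derivative_ne_zero (hn : P.natDegree ≤ n) (h0 : (derivative P).eval z ≠ 0) :
    0 < n := by
  by_contra! h
  exact h0 (by simp [derivative_of_natDegree_zero (by omega : P.natDegree = 0)])

theorem norm_eval_derivative_add_mul_le_norm_eval_derivative_conjReflect (hn : P.natDegree ≤ n)
    (hP : ∀ w : ℂ, ‖w‖ < 1 → P.eval w ≠ 0) {m : ℝ} (hm : ∀ w : ℂ, ‖w‖ = 1 → m ≤ ‖P.eval w‖)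
    (hz : ‖z‖ = 1) (h0 : (derivative P).eval z ≠ 0) :
    ‖(derivative P).eval z‖ + n * m ≤ ‖(derivative (P.conjReflect n)).eval z‖ := by
  have hn0 := pos_of_eval_derivative_ne_zero hn h0
  refine Complex.norm_add_le_norm_of_forall_norm_lt h0
    (norm_eval_derivative_le_norm_eval_derivative_conjReflect hn hP hz) fun d hd => ?_
  obtain ⟨c, rfl, hdc⟩ := Complex.exists_natCast_mul_conj_mul_pow_eq hn0 hz d
  have hcm : ‖c‖ < m := by
    rw [hdc] at hd
    exact lt_of_mul_lt_mul_left hd (Nat.cast_nonneg n)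
  refine norm_eval_derivative_le_norm_eval_derivative_conjReflect_sub hn (fun w hw hPw => ?_) hz
  have := Complex.le_norm_of_forall_norm_eq_one_le P.differentiable hP hm hw.le
  rw [hPw] at this
  linarith

theorem norm_eval_derivative_add_norm_eval_derivative_conjReflect_le (hn : P.natDegree ≤ n)
    (hP : ∀ w : ℂ, ‖w‖ < 1 → P.eval w ≠ 0) {M : ℝ} (hM : ∀ w : ℂ, ‖w‖ = 1 → ‖P.eval w‖ ≤ M)
    (hz : ‖z‖ = 1) (h0 : (derivative P).eval z ≠ 0) :
    ‖(derivative P).eval z‖ + ‖(derivative (P.conjReflect n)).eval z‖ ≤ n * M := by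
  have hn0 := pos_of_eval_derivative_ne_zero hn h0
  have hM0 : 0 ≤ M := (norm_nonneg _).trans (hM 1 norm_one)
  have hQ : ∀ w : ℂ, ‖w‖ ≤ 1 → ‖(P.conjReflect n).eval w‖ ≤ M :=
    fun w hw => Complex.norm_le_of_forall_norm_eq_one_le
      (P.conjReflect n).differentiable.diffContOnCl (fun u hu => by
        rw [eval_conjReflect hn hu, norm_mul, norm_pow, hu, one_pow, one_mul, Complex.norm_conj]
        exact hM u hu) hw
  refine Complex.norm_add_norm_le_of_forall_lt_norm
    (norm_eval_derivative_le_norm_eval_derivative_conjReflect hn hP hz) (by positivity)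
    fun d hd => ?_
  obtain ⟨c, rfl, hdc⟩ := Complex.exists_natCast_mul_conj_mul_pow_eq hn0 hz d
  have hcM : M < ‖c‖ := by
    rw [hdc] at hd
    exact lt_of_mul_lt_mul_left hd (Nat.cast_nonneg n)
  have := norm_eval_derivative_le_norm_eval_derivative_conjReflect_sub
    (natDegree_conjReflect_le hn) (c := c) (fun w hw hQw => by
      have := hQ w hw.le
      rw [hQw] at this
      linarith) hz
  rwa [conjReflect_conjReflect] at this

end Polynomial

theorem norm_eval_le_maxSphere (P : ℂ[X]) {w : ℂ} (hw : ‖w‖ = 1) : ‖P.eval w‖ ≤ maxSphere P :=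
  le_csSup ((isCompact_sphere (0 : ℂ) 1).image (continuous_norm.comp P.continuous)).bddAbove
    ⟨w, by simpa using hw, rfl⟩

theorem minSphere_le_norm_eval (P : ℂ[X]) {w : ℂ} (hw : ‖w‖ = 1) : minSphere P ≤ ‖P.eval w‖ :=
  csInf_le ((isCompact_sphere (0 : ℂ) 1).image (continuous_norm.comp P.continuous)).bddBelow
    ⟨w, by simpa using hw, rfl⟩

theorem stmt_4 (n : ℕ) (P : Polynomial ℂ) (hP : P.natDegree = n)
    (hz : ∀ z : ℂ, ‖z‖ < 1 → P.eval z ≠ 0) :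
    ∀ z : ℂ, ‖z‖ = 1 →
      ‖(derivative P).eval z‖ ≤ (n / 2 : ℝ) * (maxSphere P - minSphere P) := by
  intro z hz1
  have hmM : minSphere P ≤ maxSphere P :=
    (minSphere_le_norm_eval P norm_one).trans (norm_eval_le_maxSphere P norm_one)
  rcases eq_or_ne ((derivative P).eval z) 0 with h0 | h0
  · rw [h0, norm_zero]
    exact mul_nonneg (by positivity) (sub_nonneg.mpr hmM)
  have hlower := norm_eval_derivative_add_mul_le_norm_eval_derivative_conjReflect hP.le hz
    (fun w => minSphere_le_norm_eval P) hz1 h0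
  have hupper := norm_eval_derivative_add_norm_eval_derivative_conjReflect_le hP.le hz
    (fun w => norm_eval_le_maxSphere P) hz1 h0
  linarith
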